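/- For every d ≥ 1, every integer n ≥ 1, every σ ∈ {E,O}^d, and every real polynomial f in d variables of total degree at most 2n−1, the cubature formula ∫_{[−1,1]^d} f(x) W_d(x) dx = 2^{d−1} ( I^{σ_1}_n ⊗ ⋯ ⊗ I^{σ_d}_n f + I^{σ̃_1}_n ⊗ ⋯ ⊗ I^{σ̃_d}_n f ) holds. -/

import Mathlib

open Real MeasureTheory

/-- The endpoint weights `ε_j`: `1/2` for `j ∈ {0, n}` and `1` otherwise. -/
noncomputable def chebLobattoWeight (n j : ℕ) : ℝ :=
  if j = 0 ∨ j = n then 1 / 2 else 1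

/-- The `d`-fold tensor sum `I^{τ₁}_n ⊗ ⋯ ⊗ I^{τ_d}_n f`, where for each coordinate
`i` the one-dimensional functional `I^E_n` (if `τ i = true`) or `I^O_n`
(if `τ i = false`) is applied to the `i`-th variable of `f`;
`I^E_n g = (1/n) ∑_{0≤j≤n, j even} ε_j g(cos(jπ/n))` and
`I^O_n g = (1/n) ∑_{0≤j≤n, j odd} ε_j g(cos(jπ/n))`. -/
noncomputable def tensorCheb (d n : ℕ) (τ : Fin d → Bool)
    (f : MvPolynomial (Fin d) ℝ) : ℝ :=
  ∑ j ∈ Fintype.piFinset (fun i =>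
      (Finset.range (n + 1)).filter (fun k => if τ i then Even k else Odd k)),
    (∏ i, chebLobattoWeight n (j i) / (n : ℝ)) *
      MvPolynomial.eval (fun i => Real.cos ((j i : ℝ) * π / n)) f


/-!
On each coordinate, the full Chebyshev–Gauss–Lobatto rule `I^E_n + I^O_n` integrates polynomials
of degree `< 2n` exactly against the Chebyshev measure, and the alternating rule `I^E_n - I^O_n`
kills polynomials of degree `< n`. Both are linear, so it suffices to check them on the Chebyshev
polynomials `T_i`, where `T_i (cos (jπ/n)) = cos (ijπ/n)` turns them into sums of roots of unity;
for the alternating rule `(-1)^j T_i (cos (jπ/n)) = T_{i+n} (cos (jπ/n))`.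

A monomial `x^v` of total degree `< 2n` has at most one exponent `v i₀ ≥ n`. For `i ≠ i₀` the two
halves `I^E_n`, `I^O_n` then agree on `x^(v i)`, so expanding
`∏ i, (I^{σ i}_n + I^{σ̃ i}_n) x^(v i)` leaves `2^(d-1)` times the two tensor terms.
-/

open Finset Polynomial Polynomial.Chebyshev

lemma sum_range_cos_mul_eq_zero {n k : ℕ} (hk : ¬ 2 * n ∣ k) :
    ∑ j ∈ range (2 * n), cos (k * (j * π / n)) = 0 := by
  rcases eq_or_ne n 0 with rfl | hn
  · simp
  have hζ := Complex.isPrimitiveRoot_exp (2 * n) (by omega)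
  set ζ := Complex.exp (2 * π * Complex.I / (2 * n : ℕ))
  have hcos : ∀ j : ℕ, cos (k * (j * π / n)) = ((ζ ^ k) ^ j).re := by
    intro j
    rw [← pow_mul, ← Complex.exp_nat_mul, ← Complex.exp_ofReal_mul_I_re]
    congr 2
    push_cast
    field_simp
  simp_rw [hcos, ← Complex.re_sum]
  have hζk : ζ ^ k ≠ 1 := by rwa [Ne, hζ.pow_eq_one_iff_dvd]
  rw [geom_sum_eq hζk, ← pow_mul, mul_comm, pow_mul, hζ.pow_eq_one, one_pow, sub_self, zero_div,
    Complex.zero_re]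

lemma chebLobattoWeight_eq_one_sub {n j : ℕ} (hn : n ≠ 0) :
    chebLobattoWeight n j = 1 - (if j = 0 then 1 / 2 else 0) - (if j = n then 1 / 2 else 0) := by
  unfold chebLobattoWeight
  split_ifs <;> first | omega | norm_num

lemma two_mul_sum_chebLobattoWeight_mul {n : ℕ} (hn : n ≠ 0) (c : ℕ → ℝ)
    (hc : ∀ j ≤ 2 * n, c (2 * n - j) = c j) :
    2 * ∑ j ∈ range (n + 1), chebLobattoWeight n j * c j = ∑ j ∈ range (2 * n), c j := by
  have hweight : ∑ j ∈ range (n + 1), chebLobattoWeight n j * c j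
      = ∑ j ∈ range (n + 1), c j - c 0 / 2 - c n / 2 := by
    simp_rw [chebLobattoWeight_eq_one_sub hn, sub_mul, sum_sub_distrib, ite_mul, zero_mul, one_mul,
      sum_ite_eq', mem_range]
    simp only [Nat.zero_lt_succ, Nat.lt_succ_self, if_true]
    ring
  have hupper : ∑ j ∈ range n, c (n + j) = ∑ j ∈ range n, c (j + 1) := by
    rw [← sum_range_reflect]
    refine sum_congr rfl fun j hj => ?_
    have hj := mem_range.mp hj
    rw [← hc (j + 1) (by omega)]
    congr 1
    omega
  rw [hweight, two_mul n, sum_range_add c n n, hupper]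
  linarith [sum_range_succ c n, sum_range_succ' c n]

lemma sum_chebLobattoWeight_mul_cos {n k : ℕ} (hn : n ≠ 0) (hk : k < 2 * n) :
    ∑ j ∈ range (n + 1), chebLobattoWeight n j * cos (k * (j * π / n)) =
      if k = 0 then (n : ℝ) else 0 := by
  have hsymm : ∀ j ≤ 2 * n, cos (k * ((2 * n - j : ℕ) * π / n)) = cos (k * (j * π / n)) := by
    intro j hj
    rw [← cos_nat_mul_two_pi_sub _ k]
    congr 1
    push_cast [Nat.cast_sub hj]
    field_simp
    ring
  have hfold := two_mul_sum_chebLobattoWeight_mul hn (fun j => cos (k * (j * π / n))) hsymm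
  split_ifs with hk0
  · subst hk0
    simp only [Nat.cast_zero, zero_mul, cos_zero, sum_const, card_range, nsmul_eq_mul,
      mul_one] at hfold ⊢
    push_cast at hfold
    linarith
  · rw [sum_range_cos_mul_eq_zero (Nat.not_dvd_of_pos_of_lt (by omega) hk)] at hfold
    linarith

namespace Polynomial.Chebyshev

lemma linearMap_apply_eq_of_degree_lt {M : Type*} [AddCommGroup M] [Module ℝ M]
    {L₁ L₂ : ℝ[X] →ₗ[ℝ] M} {m : ℕ} (hL : ∀ i < m, L₁ (T ℝ i) = L₂ (T ℝ i)) {P : ℝ[X]}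
    (hP : P.degree < m) :
    L₁ P = L₂ P := by
  have hspan := Sequence.span_degreeLT (chebyshevTsequence ℝ) (m := m) (by simp)
  refine LinearMap.eqOn_span' (s := chebyshevTsequence ℝ '' Set.Iio m) ?_
    (hspan ▸ mem_degreeLT.mpr hP)
  rintro _ ⟨i, hi, rfl⟩
  exact hL i hi

noncomputable def integralMeasureT : ℝ[X] →ₗ[ℝ] ℝ where
  toFun P := ∫ x, P.eval x ∂measureT
  map_add' P Q := by
    simp only [eval_add]
    exact integral_add (integrable_measureT P.continuousOn) (integrable_measureT Q.continuousOn)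
  map_smul' c P := by simp [integral_const_mul]

lemma integralMeasureT_apply (P : ℝ[X]) : integralMeasureT P = ∫ x, P.eval x ∂measureT := rfl

lemma integralMeasureT_T (i : ℕ) : integralMeasureT (T ℝ i) = if i = 0 then π else 0 := by
  split_ifs with hi
  · subst hi
    exact integral_eval_T_real_measureT_zero
  · exact integral_eval_T_real_measureT_of_ne_zero (by exact_mod_cast hi)

end Polynomial.Chebyshev

/-- `lobattoHalf n true` is `I^E_n` and `lobattoHalf n false` is `I^O_n`. -/
noncomputable def lobattoHalf (n : ℕ) (b : Bool) : ℝ[X] →ₗ[ℝ] ℝ :=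
  ∑ j ∈ (range (n + 1)).filter (fun k => if b then Even k else Odd k),
    (chebLobattoWeight n j / n) • leval (cos (j * π / n))

lemma lobattoHalf_apply (n : ℕ) (b : Bool) (P : ℝ[X]) :
    lobattoHalf n b P = ∑ j ∈ (range (n + 1)).filter (fun k => if b then Even k else Odd k),
      chebLobattoWeight n j / n * P.eval (cos (j * π / n)) := by
  simp [lobattoHalf]

lemma lobattoHalf_true_add_false (n : ℕ) (P : ℝ[X]) :
    lobattoHalf n true P + lobattoHalf n false P =
      ∑ j ∈ range (n + 1), chebLobattoWeight n j / n * P.eval (cos (j * π / n)) := by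
  simp only [lobattoHalf_apply, if_true, Bool.false_eq_true, if_false, ← Nat.not_even_iff_odd]
  exact sum_filter_add_sum_filter_not _ _ _

lemma lobattoHalf_true_sub_false (n : ℕ) (P : ℝ[X]) :
    lobattoHalf n true P - lobattoHalf n false P =
      ∑ j ∈ range (n + 1), chebLobattoWeight n j / n * ((-1) ^ j * P.eval (cos (j * π / n))) := by
  rw [← sum_filter_add_sum_filter_not _ Even]
  simp only [lobattoHalf_apply, if_true, Bool.false_eq_true, if_false, ← Nat.not_even_iff_odd]
  rw [sub_eq_add_neg, ← sum_neg_distrib]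
  congr 1 <;> refine sum_congr rfl fun j hj => ?_
  · rw [(mem_filter.mp hj).2.neg_one_pow, one_mul]
  · rw [(Nat.not_even_iff_odd.mp (mem_filter.mp hj).2).neg_one_pow]
    ring

lemma lobattoHalf_add_not_eq_integral {n : ℕ} (hn : n ≠ 0) (b : Bool) {P : ℝ[X]}
    (hP : P.degree < 2 * n) :
    lobattoHalf n b P + lobattoHalf n (!b) P = (∫ x, P.eval x ∂measureT) / π := by
  suffices (lobattoHalf n true + lobattoHalf n false) P = (π⁻¹ • integralMeasureT) P by
    cases b
    · rw [add_comm]; simpa [div_eq_inv_mul, integralMeasureT_apply] using this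
    · simpa [div_eq_inv_mul, integralMeasureT_apply] using this
  refine linearMap_apply_eq_of_degree_lt (fun i hi => ?_) (by exact_mod_cast hP)
  rw [LinearMap.add_apply, lobattoHalf_true_add_false, LinearMap.smul_apply, integralMeasureT_T]
  simp_rw [T_real_cos, div_mul_eq_mul_div, ← sum_div]
  push_cast
  rw [sum_chebLobattoWeight_mul_cos hn hi, smul_eq_mul]
  split_ifs
  · field_simp
  · simp

lemma lobattoHalf_not_eq {n : ℕ} (b : Bool) {P : ℝ[X]} (hP : P.degree < n) :
    lobattoHalf n (!b) P = lobattoHalf n b P := by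
  suffices lobattoHalf n true P = lobattoHalf n false P by cases b <;> simp [this]
  refine sub_eq_zero.mp <| linearMap_apply_eq_of_degree_lt
    (L₁ := lobattoHalf n true - lobattoHalf n false) (L₂ := 0) (fun i hi => ?_) hP
  have hn : (n : ℝ) ≠ 0 := by norm_cast; omega
  have hcos : ∀ j : ℕ, (-1) ^ j * cos (i * (j * π / n)) = cos ((i + n : ℕ) * (j * π / n)) := by
    intro j
    rw [← cos_add_nat_mul_pi]
    congr 1
    push_cast
    field_simp
  rw [LinearMap.sub_apply, lobattoHalf_true_sub_false, LinearMap.zero_apply]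
  simp_rw [T_real_cos, div_mul_eq_mul_div, ← sum_div]
  push_cast
  simp_rw [hcos]
  rw [sum_chebLobattoWeight_mul_cos (by omega) (by omega), if_neg (by omega), zero_div]

lemma setIntegral_Ioo_mul_inv_pi_mul_sqrt (g : ℝ → ℝ) :
    ∫ x in Set.Ioo (-1) 1, g x * (π * √(1 - x ^ 2))⁻¹ = (∫ x, g x ∂measureT) / π := by
  rw [integral_measureT, intervalIntegral.integral_of_le (by norm_num),
    ← integral_Ioc_eq_integral_Ioo, ← integral_div]
  congr 1 with x
  rw [mul_inv, sqrt_inv]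
  ring

lemma integrableOn_Ioo_mul_inv_pi_mul_sqrt {g : ℝ → ℝ} (hg : ContinuousOn g (Set.Icc (-1) 1)) :
    IntegrableOn (fun x => g x * (π * √(1 - x ^ 2))⁻¹) (Set.Ioo (-1) 1) := by
  have h := intervalIntegrable_sqrt_one_sub_sq_inv.continuousOn_mul
    (hg.mono (Set.uIcc_of_le (by norm_num : (-1 : ℝ) ≤ 1)).subset)
  rw [intervalIntegrable_iff_integrableOn_Ioo_of_le (by norm_num)] at h
  refine IntegrableOn.congr_fun (h.div_const π) (fun x _ => ?_) measurableSet_Ioo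
  rw [mul_inv, sqrt_inv]
  ring

lemma tensorCheb_eq_sum (d n : ℕ) (τ : Fin d → Bool) (f : MvPolynomial (Fin d) ℝ) :
    tensorCheb d n τ f = ∑ v ∈ f.support, f.coeff v * ∏ i, lobattoHalf n (τ i) (X ^ v i) := by
  simp_rw [tensorCheb, lobattoHalf_apply, eval_pow, eval_X, prod_univ_sum, mul_sum,
    MvPolynomial.eval_eq', mul_sum]
  rw [sum_comm]
  refine sum_congr rfl fun v _ => sum_congr rfl fun j _ => ?_
  rw [prod_mul_distrib]
  ring

lemma integral_eval_mul_prod_inv_pi_mul_sqrt {ι : Type*} [Fintype ι] (f : MvPolynomial ι ℝ) :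
    ∫ x in Set.univ.pi (fun _ : ι => Set.Ioo (-1 : ℝ) 1),
        MvPolynomial.eval x f * ∏ i, (π * √(1 - x i ^ 2))⁻¹ =
      ∑ v ∈ f.support, f.coeff v * ∏ i, (∫ x, x ^ v i ∂measureT) / π := by
  have hμ : volume.restrict (Set.univ.pi fun _ : ι => Set.Ioo (-1 : ℝ) 1) =
      Measure.pi fun _ => volume.restrict (Set.Ioo (-1 : ℝ) 1) := by
    rw [volume_pi, Measure.restrict_pi_pi]
  have hmonomials : ∀ x : ι → ℝ, MvPolynomial.eval x f * ∏ i, (π * √(1 - x i ^ 2))⁻¹ =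
      ∑ v ∈ f.support, f.coeff v * ∏ i, (x i ^ v i * (π * √(1 - x i ^ 2))⁻¹) := by
    intro x
    rw [MvPolynomial.eval_eq', sum_mul]
    refine sum_congr rfl fun v _ => ?_
    rw [prod_mul_distrib]
    ring
  simp_rw [hmonomials, hμ]
  rw [integral_finsetSum _ fun v _ => (Integrable.fintype_prod fun i =>
    integrableOn_Ioo_mul_inv_pi_mul_sqrt (continuousOn_pow (v i))).const_mul _]
  refine sum_congr rfl fun v _ => ?_
  rw [integral_const_mul,
    integral_fintype_prod_eq_prod (fun i t => t ^ v i * (π * √(1 - t ^ 2))⁻¹)]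
  simp_rw [setIntegral_Ioo_mul_inv_pi_mul_sqrt]

lemma Finset.prod_add_eq_two_pow_mul {ι R : Type*} [Fintype ι] [CommSemiring R] {a b : ι → R}
    (i₀ : ι) (h : ∀ i ≠ i₀, a i = b i) :
    ∏ i, (a i + b i) = 2 ^ (Fintype.card ι - 1) * (∏ i, a i + ∏ i, b i) := by
  classical
  have hcard : #(univ.erase i₀) = Fintype.card ι - 1 := by
    rw [card_erase_of_mem (mem_univ i₀), card_univ]
  have hb : ∏ i ∈ univ.erase i₀, b i = ∏ i ∈ univ.erase i₀, a i :=
    prod_congr rfl fun i hi => (h i (ne_of_mem_erase hi)).symm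
  have hab : ∏ i ∈ univ.erase i₀, (a i + b i) =
      2 ^ (Fintype.card ι - 1) * ∏ i ∈ univ.erase i₀, a i := by
    rw [← hcard, ← prod_const, ← prod_mul_distrib]
    exact prod_congr rfl fun i hi => by rw [← h i (ne_of_mem_erase hi), two_mul]
  rw [← mul_prod_erase univ _ (mem_univ i₀), ← mul_prod_erase univ a (mem_univ i₀),
    ← mul_prod_erase univ b (mem_univ i₀), hab, hb]
  ring

lemma Finset.exists_forall_ne_lt_of_sum_lt {ι : Type*} [Fintype ι] [Nonempty ι] {v : ι → ℕ}
    {n : ℕ} (hv : ∑ i, v i < 2 * n) : ∃ i₀, ∀ i ≠ i₀, v i < n := by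
  classical
  obtain ⟨i₀, hmax⟩ := Finite.exists_max v
  refine ⟨i₀, fun i hi => ?_⟩
  have hpair : v i + v i₀ ≤ ∑ i, v i := by
    rw [← sum_pair hi]
    exact sum_le_sum_of_subset (subset_univ _)
  have := hmax i
  omega

/-- Theorem 2.2: for every `d ≥ 1`, `n ≥ 1`, every `σ ∈ {E,O}^d` (encoded as
`σ : Fin d → Bool`, `true = E`, `false = O`) and every real polynomial `f` in `d`
variables of total degree at most `2n - 1`,
`∫_{[-1,1]^d} f(x) W_d(x) dx = 2^{d-1} (I^{σ₁}_n ⊗ ⋯ ⊗ I^{σ_d}_n f +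
I^{σ̃₁}_n ⊗ ⋯ ⊗ I^{σ̃_d}_n f)`, where `W_d(x) = π^{-d} ∏ᵢ (1 - xᵢ²)^{-1/2}` and
`σ̃` interchanges `E` and `O` in every coordinate. -/
theorem cubature_chebyshev_cube (d : ℕ) (hd : 1 ≤ d) (n : ℕ) (hn : 1 ≤ n)
    (σ : Fin d → Bool) (f : MvPolynomial (Fin d) ℝ)
    (hf : f.totalDegree ≤ 2 * n - 1) :
    ∫ x in Set.univ.pi (fun _ : Fin d => Set.Ioo (-1 : ℝ) 1),
        MvPolynomial.eval x f * ∏ i, (π * Real.sqrt (1 - (x i) ^ 2))⁻¹ =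
      2 ^ (d - 1) *
        (tensorCheb d n σ f + tensorCheb d n (fun i => ! σ i) f) := by
  have : Nonempty (Fin d) := ⟨⟨0, hd⟩⟩
  rw [integral_eval_mul_prod_inv_pi_mul_sqrt, tensorCheb_eq_sum, tensorCheb_eq_sum,
    ← sum_add_distrib, mul_sum]
  refine sum_congr rfl fun v hv => ?_
  have hdeg : ∑ i, v i < 2 * n := by
    have := MvPolynomial.le_totalDegree hv
    rw [Finsupp.sum_fintype _ _ fun _ => rfl] at this
    omega
  have hX : ∀ {i m}, v i < m → (X ^ v i : ℝ[X]).degree < m := fun h => by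
    rw [degree_X_pow]
    exact_mod_cast h
  obtain ⟨i₀, hi₀⟩ := exists_forall_ne_lt_of_sum_lt hdeg
  have hmoment : ∀ i, (∫ x, x ^ v i ∂measureT) / π =
      lobattoHalf n (σ i) (X ^ v i) + lobattoHalf n (!σ i) (X ^ v i) := fun i => by
    rw [lobattoHalf_add_not_eq_integral (by omega) _
      (hX ((single_le_sum (fun _ _ => Nat.zero_le _) (mem_univ i)).trans_lt hdeg))]
    simp only [eval_pow, eval_X]
  simp_rw [hmoment]
  rw [prod_add_eq_two_pow_mul i₀ fun i hi => (lobattoHalf_not_eq _ (hX (hi₀ i hi))).symm,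
    Fintype.card_fin]
  ring
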